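/- Let G be a finite simple graph admitting a barbell partition and let v be a vertex of G. Then the graph jdup(G, v), obtained from G by adding a new vertex u adjacent to v and to all neighbors of v, admits a barbell partition. -/

import Mathlib

open SimpleGraph

/-- A barbell partition of a graph `G`: a partition of the vertex set into
`R`, `W1`, `W2` with `W1, W2` nonempty, no edges between `W1` and `W2`, and
every vertex of `R` has a number of neighbors in each `Wi` different from 1. -/
def IsBarbellPartition {V : Type*} (G : SimpleGraph V) (R W1 W2 : Set V) : Prop :=
  R ∪ W1 ∪ W2 = Set.univ ∧ Disjoint R W1 ∧ Disjoint R W2 ∧ Disjoint W1 W2 ∧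
  W1.Nonempty ∧ W2.Nonempty ∧
  (∀ w1 ∈ W1, ∀ w2 ∈ W2, ¬ G.Adj w1 w2) ∧
  (∀ v ∈ R, (G.neighborSet v ∩ W1).ncard ≠ 1 ∧ (G.neighborSet v ∩ W2).ncard ≠ 1)

/-- `G` admits a barbell partition. -/
def HasBarbellPartition {V : Type*} (G : SimpleGraph V) : Prop :=
  ∃ R W1 W2 : Set V, IsBarbellPartition G R W1 W2

/-- A fort of `G`: a nonempty vertex set `F` such that no vertex outside `F`
has exactly one neighbor in `F`. -/
def IsFort {V : Type*} (G : SimpleGraph V) (F : Set V) : Prop :=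
  F.Nonempty ∧ ∀ v ∉ F, (G.neighborSet v ∩ F).ncard ≠ 1

/-- `dup G v`: duplicate the vertex `v` of `G` without an edge; the new vertex
`none` is adjacent exactly to the neighbors of `v`. -/
def dup {V : Type*} (G : SimpleGraph V) (v : V) : SimpleGraph (Option V) where
  Adj x y :=
    match x, y with
    | some a, some b => G.Adj a b
    | some a, none => G.Adj v a
    | none, some a => G.Adj v a
    | none, none => False
  symm := by
    constructor
    rintro (_ | a) (_ | b) h
    · exact h
    · exact h
    · exact h
    · exact h.symm
  loopless := by
    constructor
    rintro (_ | a) h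
    · exact h
    · exact G.irrefl h

/-- `jdup G v`: duplicate the vertex `v` of `G` with an edge; the new vertex
`none` is adjacent to `v` and to all neighbors of `v`. -/
def jdup {V : Type*} (G : SimpleGraph V) (v : V) : SimpleGraph (Option V) where
  Adj x y :=
    match x, y with
    | some a, some b => G.Adj a b
    | some a, none => G.Adj v a ∨ a = v
    | none, some a => G.Adj v a ∨ a = v
    | none, none => False
  symm := by
    constructor
    rintro (_ | a) (_ | b) h
    · exact h
    · exact h
    · exact h
    · exact h.symm
  loopless := by
    constructor
    rintro (_ | a) h
    · exact h
    · exact G.irrefl h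

/-! Put the new vertex `none` into the part containing `v`, i.e. pull the partition back along
the projection `x ↦ x.getD v`. This projection sends edges to edges or to a single vertex, and
maps the neighbours of `x` lying in a part that does not contain `x.getD v` onto the
corresponding neighbours in `G`; a set of size one has an image of size one, so the counting condition
pulls back. -/

theorem Set.ncard_ne_one_of_ncard_image_ne_one {α β : Type*} {f : α → β} {s : Set α}
    (h : (f '' s).ncard ≠ 1) : s.ncard ≠ 1 := by
  intro hs
  obtain ⟨a, rfl⟩ := Set.ncard_eq_one.mp hs
  exact h (by simp)

theorem IsBarbellPartition.comap {V W : Type*} {G : SimpleGraph V} {H : SimpleGraph W}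
    {f : W → V} (hf : Function.Surjective f)
    (hadj : ∀ x y, H.Adj x y → G.Adj (f x) (f y) ∨ f x = f y)
    (hnbr : ∀ x S, f x ∉ S → f '' (H.neighborSet x ∩ f ⁻¹' S) = G.neighborSet (f x) ∩ S)
    {R W1 W2 : Set V} (h : IsBarbellPartition G R W1 W2) :
    IsBarbellPartition H (f ⁻¹' R) (f ⁻¹' W1) (f ⁻¹' W2) := by
  obtain ⟨hU, hRW1, hRW2, hW12, hW1, hW2, hnoadj, hcnt⟩ := h
  refine ⟨by simp only [← Set.preimage_union, hU, Set.preimage_univ], hRW1.preimage f,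
    hRW2.preimage f, hW12.preimage f, hW1.preimage hf, hW2.preimage hf, ?_, ?_⟩
  · intro x hx y hy hxy
    rcases hadj x y hxy with hxy | hxy
    · exact hnoadj _ hx _ hy hxy
    · exact Set.disjoint_left.mp hW12 hx (hxy ▸ hy)
  · intro x hx
    constructor <;> apply Set.ncard_ne_one_of_ncard_image_ne_one
    · rw [hnbr x W1 (hRW1.notMem_of_mem_left hx)]
      exact (hcnt _ hx).1
    · rw [hnbr x W2 (hRW2.notMem_of_mem_left hx)]
      exact (hcnt _ hx).2

section jdup

variable {V : Type*} {G : SimpleGraph V} {v : V}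

theorem jdup_adj_getD {x y : Option V} (h : (jdup G v).Adj x y) :
    G.Adj (x.getD v) (y.getD v) ∨ x.getD v = y.getD v := by
  cases x <;> cases y <;> simp_all [jdup, eq_comm, G.adj_comm]

theorem image_getD_jdup_neighborSet_inter (x : Option V) (S : Set V) (hx : x.getD v ∉ S) :
    (·.getD v) '' ((jdup G v).neighborSet x ∩ (·.getD v) ⁻¹' S) =
      G.neighborSet (x.getD v) ∩ S := by
  ext a
  constructor
  · rintro ⟨y, ⟨hxy, hy⟩, rfl⟩
    refine ⟨?_, hy⟩
    rcases jdup_adj_getD hxy with hxy | hxy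
    · exact hxy
    · exact absurd (hxy ▸ hy) hx
  · rintro ⟨ha, haS⟩
    refine ⟨some a, ⟨?_, haS⟩, rfl⟩
    cases x
    · exact Or.inl ha
    · exact ha

end jdup

theorem jdup_hasBarbellPartition_general {V : Type*} (G : SimpleGraph V) (v : V)
    (h : HasBarbellPartition G) : HasBarbellPartition (jdup G v) := by
  obtain ⟨R, W1, W2, hp⟩ := h
  exact ⟨_, _, _, hp.comap (f := (·.getD v)) (fun a => ⟨some a, rfl⟩)
    (fun _ _ => jdup_adj_getD) (fun x S => image_getD_jdup_neighborSet_inter x S)⟩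

/-- If `G` admits a barbell partition, then join-duplicating any vertex yields a
graph admitting a barbell partition. -/
theorem jdup_hasBarbellPartition {V : Type*} [Fintype V] (G : SimpleGraph V) (v : V)
    (h : HasBarbellPartition G) : HasBarbellPartition (jdup G v) :=
  jdup_hasBarbellPartition_general G v h
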